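/- Let (E,‖·‖_E) be a pseudo-normed real vector space and r < r' real numbers. For every f ∈ Σ^r_∞(E) one has sup_{n∈ℕ} 2^{−n(r'−r)} ‖S_n f‖_{Σ^{r'}_1} ≤ (1/(1 − 2^{r−r'})) ‖f‖_{Σ^r_∞}, and moreover 2^{−n(r'−r)} ‖S_n f‖_{Σ^{r'}_1} → 0 as n → ∞. -/

import Mathlib

open Filter
open scoped ENNReal NNReal

/-- A pseudo-norm on a real vector space: nonnegative, symmetric, subadditive,
and vanishing exactly at `0`. -/
structure IsPseudoNorm {E : Type*} [AddCommGroup E] [Module ℝ E] (N : E → ℝ) : Prop where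
  nonneg : ∀ x, 0 ≤ N x
  neg : ∀ x, N (-x) = N x
  add_le : ∀ x y, N (x + y) ≤ N x + N y
  eq_zero_iff : ∀ x, N x = 0 ↔ x = 0

/-- The `Σ^s_q(E)` pseudo-norm of a sequence `f : ℕ → E`:
`(∑_k 2^{qks} ‖f_k‖_E^q)^{1/q}` for `q < ∞` and `sup_k 2^{ks} ‖f_k‖_E` for `q = ∞`. -/
noncomputable def sigmaNorm {E : Type*} (N : E → ℝ) (s : ℝ) (q : ℝ≥0∞) (f : ℕ → E) : ℝ≥0∞ :=
  if q = ⊤ then ⨆ k : ℕ, ENNReal.ofReal ((2 : ℝ) ^ ((k : ℝ) * s) * N (f k))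
  else (∑' k : ℕ, ENNReal.ofReal ((2 : ℝ) ^ ((k : ℝ) * s) * N (f k)) ^ q.toReal) ^ (1 / q.toReal)

/-- Membership in `Σ^s_q(E)`: finiteness of the norm when `q < ∞`, and
`2^{ks}‖f_k‖_E → 0` when `q = ∞`. -/
def memSigma {E : Type*} (N : E → ℝ) (s : ℝ) (q : ℝ≥0∞) (f : ℕ → E) : Prop :=
  if q = ⊤ then Tendsto (fun k : ℕ => (2 : ℝ) ^ ((k : ℝ) * s) * N (f k)) atTop (nhds 0)
  else sigmaNorm N s q f < ⊤

/-- Friedrichs smoothing operator `S_n`: truncation of a sequence after index `n`. -/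
def smoothS {E : Type*} [Zero E] (n : ℕ) (f : ℕ → E) : ℕ → E :=
  fun k => if k ≤ n then f k else 0

/-! With `q = 2^(r-r') < 1` and `a k = 2^(kr) ‖f_k‖_E`, the rescaled truncated norm
`2^(-n(r'-r)) ‖S_n f‖_{Σ^{r'}_1}` is the convolution `∑_{k ≤ n} q^(n-k) a_k` of a geometric
sequence with `a`. It is therefore at most `(∑_j q^j) sup_k a_k = sup_k a_k / (1 - q)`, and it
tends to `0` when `a_k → 0`, by dominated convergence for series (Tannery's theorem). -/

open Finset

theorem tendsto_sum_range_pow_sub_mul_of_tendsto_zero {q : ℝ} (hq0 : 0 ≤ q) (hq1 : q < 1)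
    {a : ℕ → ℝ} (ha : Tendsto a atTop (nhds 0)) :
    Tendsto (fun n => ∑ k ∈ range (n + 1), q ^ (n - k) * a k) atTop (nhds 0) := by
  obtain ⟨C, hC⟩ := ha.cauchySeq.norm_bddAbove
  -- reindex by `j = n - k` and extend by zero, so that Tannery's theorem applies
  set F : ℕ → ℕ → ℝ := fun n j => if j ≤ n then q ^ j * a (n - j) else 0
  have hF_tsum : ∀ n, ∑' j, F n j = ∑ k ∈ range (n + 1), q ^ (n - k) * a k := fun n => by
    rw [tsum_eq_sum (s := range (n + 1)) fun j hj => if_neg (by simpa [Nat.lt_succ_iff] using hj),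
      ← sum_range_reflect]
    refine sum_congr rfl fun j hj => ?_
    have hjn : j ≤ n := Nat.lt_succ_iff.mp (mem_range.mp hj)
    simp only [Nat.add_sub_cancel, if_pos (Nat.sub_le n j), Nat.sub_sub_self hjn]
  have hF_tendsto : ∀ j, Tendsto (F · j) atTop (nhds 0) := fun j => by
    have : Tendsto (fun n => q ^ j * a (n - j)) atTop (nhds 0) := by
      simpa using (ha.comp (tendsto_sub_atTop_nat j)).const_mul (q ^ j)
    refine this.congr' ?_
    filter_upwards [eventually_ge_atTop j] with n hn
    simp only [F, if_pos hn]
  have hF_bound : ∀ n j, ‖F n j‖ ≤ q ^ j * C := fun n j => by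
    by_cases hj : j ≤ n
    · simp only [F, if_pos hj, norm_mul, norm_pow, Real.norm_of_nonneg hq0]
      gcongr
      exact hC ⟨n - j, rfl⟩
    · simp only [F, if_neg hj, norm_zero]
      exact mul_nonneg (pow_nonneg hq0 j) ((norm_nonneg _).trans (hC ⟨0, rfl⟩))
  simpa only [hF_tsum, tsum_zero] using tendsto_tsum_of_dominated_convergence
    ((summable_geometric_of_lt_one hq0 hq1).mul_right C) hF_tendsto (.of_forall hF_bound)

theorem ENNReal.sum_range_pow_sub_mul_le (q : ℝ≥0∞) (a : ℕ → ℝ≥0∞) (n : ℕ) :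
    ∑ k ∈ range (n + 1), q ^ (n - k) * a k ≤ (1 - q)⁻¹ * ⨆ k, a k :=
  calc ∑ k ∈ range (n + 1), q ^ (n - k) * a k
      ≤ ∑ k ∈ range (n + 1), q ^ (n - k) * ⨆ k, a k := by gcongr with k; exact le_iSup a k
    _ = (∑ j ∈ range (n + 1), q ^ j) * ⨆ k, a k := by
      rw [← sum_mul, ← sum_range_reflect (q ^ ·), Nat.add_sub_cancel]
    _ ≤ (∑' j, q ^ j) * ⨆ k, a k := by gcongr; exact ENNReal.sum_le_tsum _
    _ = (1 - q)⁻¹ * ⨆ k, a k := by rw [ENNReal.tsum_geometric]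

theorem sigmaNorm_top {E : Type*} (N : E → ℝ) (s : ℝ) (f : ℕ → E) :
    sigmaNorm N s ⊤ f = ⨆ k : ℕ, ENNReal.ofReal ((2 : ℝ) ^ ((k : ℝ) * s) * N (f k)) :=
  if_pos rfl

theorem sigmaNorm_one_smoothS {E : Type*} [Zero E] {N : E → ℝ} (h0 : N 0 = 0) (s : ℝ) (n : ℕ)
    (f : ℕ → E) :
    sigmaNorm N s 1 (smoothS n f)
      = ∑ k ∈ range (n + 1), ENNReal.ofReal ((2 : ℝ) ^ ((k : ℝ) * s) * N (f k)) := by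
  rw [sigmaNorm, if_neg ENNReal.one_ne_top, ENNReal.toReal_one, div_one]
  simp only [ENNReal.rpow_one]
  rw [tsum_eq_sum (s := range (n + 1)) fun k hk => by
    simp [smoothS, h0, show ¬k ≤ n by simpa [Nat.lt_succ_iff] using hk]]
  exact sum_congr rfl fun k hk => by
    rw [smoothS, if_pos (Nat.lt_succ_iff.mp (mem_range.mp hk))]

theorem two_rpow_neg_mul_mul_two_rpow (r r' : ℝ) {k n : ℕ} (hkn : k ≤ n) :
    (2 : ℝ) ^ (-((n : ℝ) * (r' - r))) * (2 : ℝ) ^ ((k : ℝ) * r')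
      = ((2 : ℝ) ^ (r - r')) ^ (n - k) * (2 : ℝ) ^ ((k : ℝ) * r) := by
  rw [← Real.rpow_natCast, ← Real.rpow_mul zero_le_two, Nat.cast_sub hkn,
    ← Real.rpow_add two_pos, ← Real.rpow_add two_pos]
  ring_nf

theorem ofReal_two_rpow_mul_sigmaNorm_one_smoothS {E : Type*} [Zero E] {N : E → ℝ} (h0 : N 0 = 0)
    (r r' : ℝ) (n : ℕ) (f : ℕ → E) :
    ENNReal.ofReal ((2 : ℝ) ^ (-((n : ℝ) * (r' - r)))) * sigmaNorm N r' 1 (smoothS n f)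
      = ∑ k ∈ range (n + 1), ENNReal.ofReal ((2 : ℝ) ^ (r - r')) ^ (n - k) *
          ENNReal.ofReal ((2 : ℝ) ^ ((k : ℝ) * r) * N (f k)) := by
  rw [sigmaNorm_one_smoothS h0 r', mul_sum]
  refine sum_congr rfl fun k hk => ?_
  have hkn : k ≤ n := Nat.lt_succ_iff.mp (mem_range.mp hk)
  rw [← ENNReal.ofReal_mul (by positivity), ← ENNReal.ofReal_pow (by positivity),
    ← ENNReal.ofReal_mul (by positivity), ← mul_assoc, ← mul_assoc,
    two_rpow_neg_mul_mul_two_rpow r r' hkn]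

/-- Lemma 3.6 (i): for `r < r'` and `f ∈ Σ^r_∞(E)`,
`sup_n 2^{-n(r'-r)} ‖S_n f‖_{Σ^{r'}_1} ≤ (1/(1-2^{r-r'})) ‖f‖_{Σ^r_∞}`, and moreover
`2^{-n(r'-r)} ‖S_n f‖_{Σ^{r'}_1} → 0` as `n → ∞`. -/
theorem smoothS_sigmaNorm_one_sup_le {E : Type*} [AddCommGroup E] [Module ℝ E]
    (N : E → ℝ) (hN : IsPseudoNorm N) (r r' : ℝ) (hrr' : r < r')
    (f : ℕ → E) (hf : memSigma N r ⊤ f) :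
    (⨆ n : ℕ, ENNReal.ofReal ((2 : ℝ) ^ (-((n : ℝ) * (r' - r)))) *
        sigmaNorm N r' 1 (smoothS n f))
      ≤ ENNReal.ofReal (1 / (1 - (2 : ℝ) ^ (r - r'))) * sigmaNorm N r ⊤ f ∧
    Tendsto (fun n : ℕ => ENNReal.ofReal ((2 : ℝ) ^ (-((n : ℝ) * (r' - r)))) *
        sigmaNorm N r' 1 (smoothS n f)) atTop (nhds 0) := by
  set q : ℝ := (2 : ℝ) ^ (r - r')
  set a : ℕ → ℝ := fun k => (2 : ℝ) ^ ((k : ℝ) * r) * N (f k)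
  have hq0 : 0 ≤ q := by positivity
  have hq1 : q < 1 := Real.rpow_lt_one_of_one_lt_of_neg one_lt_two (by linarith)
  have h0 : N 0 = 0 := (hN.eq_zero_iff 0).mpr rfl
  simp only [ofReal_two_rpow_mul_sigmaNorm_one_smoothS h0]
  refine ⟨iSup_le fun n => ?_, ?_⟩
  · rw [sigmaNorm_top, one_div, ENNReal.ofReal_inv_of_pos (by linarith), ENNReal.ofReal_sub _ hq0,
      ENNReal.ofReal_one]
    exact ENNReal.sum_range_pow_sub_mul_le _ _ n
  · rw [memSigma, if_pos rfl] at hf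
    have ha0 : ∀ k, 0 ≤ a k := fun k => mul_nonneg (by positivity) (hN.nonneg _)
    have hsum : ∀ n, ENNReal.ofReal (∑ k ∈ range (n + 1), q ^ (n - k) * a k)
        = ∑ k ∈ range (n + 1), ENNReal.ofReal q ^ (n - k) * ENNReal.ofReal (a k) := fun n => by
      rw [ENNReal.ofReal_sum_of_nonneg fun k _ => mul_nonneg (pow_nonneg hq0 _) (ha0 k)]
      simp only [ENNReal.ofReal_mul (pow_nonneg hq0 _), ENNReal.ofReal_pow hq0]
    have h := ENNReal.tendsto_ofReal (tendsto_sum_range_pow_sub_mul_of_tendsto_zero hq0 hq1 hf)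
    rw [ENNReal.ofReal_zero] at h
    exact h.congr hsum
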